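/- Let M, k > 0, let ρ be the performance function ρ(t) = (1 − ρ_∞/M)e^{−l t} + ρ_∞/M with l > 0 and 0 < ρ_∞ < M, let W ≥ 0, and let 0 < T ≤ ∞. Suppose w : [0, T) → ℝ satisfies |w(t)| ≤ W for all t, and e : [0, T) → ℝ is differentiable with |e(t)| < M·ρ(t) for all t ∈ [0, T), satisfying e'(t) = −(k/ρ(t))·r_{M,M}(ξ(t))·ε_{M,M}(ξ(t)) + w(t) for all t ∈ [0, T), where ξ(t) = e(t)/ρ(t). Then, with ε̄ = max{|ε_{M,M}(ξ(0))|, M·(W + l·M)/(2k)}, one has |ε_{M,M}(ξ(t))| ≤ ε̄ and |ξ(t)| ≤ M·(e^{ε̄} − 1)/(e^{ε̄} + 1) < M for all t ∈ [0, T). -/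

import Mathlib

/-!
`ε_{M,M}(ξ) = 2 artanh (ξ / M)` has derivative `r_{M,M}(ξ) ≥ 2 / M`, so along the closed loop
`d/dt ε = (r / ρ) (-(k / ρ) r ε + w - ξ ρ')`. Since `ρ ≤ 1`, `|ρ'| ≤ l` and `|ξ| < M`, the damping
`(2k / M) ε²` in `ε · (ρ / r) dε/dt` beats the drift `|ε| (W + l M)` as soon as
`|ε| > M (W + l M) / (2k)`, so `|ε|` can never climb above `ε̄`. Inverting,
`ξ = M (e^ε - 1) / (e^ε + 1)`, which is monotone in `ε` and bounded by `M`.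
-/

/-- The transformed error ε_{a,b}(x) = log((1 + x/a)/(1 − x/b)). -/
noncomputable def epsErr (a b x : ℝ) : ℝ := Real.log ((1 + x / a) / (1 - x / b))

/-- The gain function r_{a,b}(x) = (1/a + 1/b)/((1 + x/a)(1 − x/b)). -/
noncomputable def gainFn (a b x : ℝ) : ℝ :=
  (1 / a + 1 / b) / ((1 + x / a) * (1 - x / b))

/-- The performance function ρ(t) = (1 − ρ_∞/M)e^{−l t} + ρ_∞/M. -/
noncomputable def perfFn (l ρ_inf M t : ℝ) : ℝ :=
  (1 - ρ_inf / M) * Real.exp (-l * t) + ρ_inf / M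

open Set Real

theorem image_le_of_deriv_neg_above {f f' : ℝ → ℝ} {a b c : ℝ}
    (hf : ∀ x ∈ Icc a b, HasDerivWithinAt f (f' x) (Icc a b) x) (ha : f a ≤ c)
    (hneg : ∀ x ∈ Ico a b, c < f x → f' x < 0) : ∀ x ∈ Icc a b, f x ≤ c := by
  intro x hx
  -- Mathlib's fence needs a strict inequality at the boundary, so fence at every level `c' > c`.
  refine le_of_forall_gt_imp_ge_of_dense fun c' hc' => ?_
  refine image_le_of_deriv_right_lt_deriv_boundary (B := fun _ => c') (B' := 0)
    (fun y hy => (hf y hy).continuousWithinAt) (fun y hy => ?_) (ha.trans hc'.le)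
    (fun _ => hasDerivAt_const _ _) (fun y hy hfy => hneg y hy (hfy ▸ hc')) hx
  exact (hf y (Ico_subset_Icc_self hy)).mono_of_mem_nhdsWithin (Icc_mem_nhdsGE_of_mem hy)

theorem abs_le_of_mul_deriv_neg {g g' : ℝ → ℝ} {a b c : ℝ}
    (hg : ∀ x ∈ Icc a b, HasDerivWithinAt g (g' x) (Icc a b) x) (ha : |g a| ≤ c)
    (hneg : ∀ x ∈ Ico a b, c < |g x| → g x * g' x < 0) : ∀ x ∈ Icc a b, |g x| ≤ c := by
  have hc : 0 ≤ c := (abs_nonneg _).trans ha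
  have hV : ∀ x ∈ Icc a b, HasDerivWithinAt (fun y => g y ^ 2) (2 * (g x * g' x)) (Icc a b) x :=
    fun x hx => ((hg x hx).pow 2).congr_deriv (by ring)
  intro x hx
  refine abs_le_of_sq_le_sq (image_le_of_deriv_neg_above hV ?_ (fun y hy hlt => ?_) x hx) hc
  · exact sq_le_sq' (abs_le.1 ha).1 (abs_le.1 ha).2
  · have : c < |g y| := by simpa [abs_of_nonneg hc] using sq_lt_sq.1 hlt
    linarith [hneg y hy this]

section PerformanceFunction

variable {l ρ_inf M : ℝ}

theorem perfFn_pos (hq0 : 0 ≤ ρ_inf / M) (hq1 : ρ_inf / M ≤ 1) (t : ℝ) :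
    0 < perfFn l ρ_inf M t := by
  have hexp := exp_pos (-l * t)
  unfold perfFn
  -- `ρ (1 + e) = e + (1 - q) e² + q` with `e = exp (-l t)`, `q = ρ_inf / M`
  nlinarith [mul_nonneg (sub_nonneg.2 hq1) (sq_nonneg (exp (-l * t)))]

theorem perfFn_le_one (hq1 : ρ_inf / M ≤ 1) (hl : 0 ≤ l) {t : ℝ} (ht : 0 ≤ t) :
    perfFn l ρ_inf M t ≤ 1 := by
  have hexp : exp (-l * t) ≤ 1 := exp_le_one_iff.2 (by nlinarith)
  unfold perfFn
  nlinarith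

theorem hasDerivAt_perfFn (t : ℝ) :
    HasDerivAt (perfFn l ρ_inf M) (-l * (perfFn l ρ_inf M t - ρ_inf / M)) t := by
  refine ((((hasDerivAt_id' t).const_mul (-l)).exp.const_mul (1 - ρ_inf / M)).add_const
    (ρ_inf / M)).congr_deriv ?_
  rw [perfFn]
  ring

theorem abs_deriv_perfFn_le (hq0 : 0 ≤ ρ_inf / M) (hq1 : ρ_inf / M ≤ 1) (hl : 0 ≤ l)
    {t : ℝ} (ht : 0 ≤ t) : |-l * (perfFn l ρ_inf M t - ρ_inf / M)| ≤ l := by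
  have h1 : exp (-l * t) ≤ 1 := exp_le_one_iff.2 (by nlinarith)
  have h0 := exp_pos (-l * t)
  have hsub : perfFn l ρ_inf M t - ρ_inf / M = (1 - ρ_inf / M) * exp (-l * t) := by
    unfold perfFn; ring
  rw [hsub, abs_mul, abs_neg, abs_of_nonneg hl, abs_of_nonneg (by positivity)]
  exact mul_le_of_le_one_right hl (by nlinarith)

end PerformanceFunction

section TransformedError

variable {M u : ℝ}

theorem one_add_div_pos_of_abs_lt (hM : 0 < M) (hu : |u| < M) : 0 < 1 + u / M := by
  have : -1 < u / M := by rw [lt_div_iff₀ hM]; linarith [(abs_lt.1 hu).1]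
  linarith

theorem one_sub_div_pos_of_abs_lt (hM : 0 < M) (hu : |u| < M) : 0 < 1 - u / M := by
  have : u / M < 1 := by rw [div_lt_iff₀ hM]; linarith [(abs_lt.1 hu).2]
  linarith

theorem hasDerivAt_epsErr {a b : ℝ} (ha : 1 + u / a ≠ 0) (hb : 1 - u / b ≠ 0) :
    HasDerivAt (epsErr a b) (gainFn a b u) u := by
  have hnum := ((hasDerivAt_id' u).div_const a).const_add 1
  have hden := ((hasDerivAt_id' u).div_const b).const_sub 1
  refine ((hnum.div hden hb).log (div_ne_zero ha hb)).congr_deriv ?_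
  rw [gainFn, Pi.div_apply]
  field_simp
  ring

theorem two_div_le_gainFn (hM : 0 < M) (hu : |u| < M) : 2 / M ≤ gainFn M M u := by
  have h1 := one_add_div_pos_of_abs_lt hM hu
  have h2 := one_sub_div_pos_of_abs_lt hM hu
  have hprod : (1 + u / M) * (1 - u / M) ≤ 1 := by nlinarith [sq_nonneg (u / M)]
  rw [gainFn, le_div_iff₀ (mul_pos h1 h2), ← add_div, one_add_one_eq_two]
  exact mul_le_of_le_one_right (by positivity) hprod

theorem mul_exp_epsErr_sub_one_div_exp_epsErr_add_one (hM : 0 < M) (hu : |u| < M) :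
    M * (exp (epsErr M M u) - 1) / (exp (epsErr M M u) + 1) = u := by
  have h1 := one_add_div_pos_of_abs_lt hM hu
  have h2 := one_sub_div_pos_of_abs_lt hM hu
  have : M - u ≠ 0 := by linarith [(abs_lt.1 hu).2]
  rw [epsErr, exp_log (div_pos h1 h2), div_eq_iff (by positivity)]
  field_simp
  ring

theorem abs_exp_sub_one_div_exp_add_one_le {x y : ℝ} (h : |x| ≤ y) :
    |(exp x - 1) / (exp x + 1)| ≤ (exp y - 1) / (exp y + 1) := by
  have hxy : exp x ≤ exp y := exp_le_exp.2 (le_abs_self x |>.trans h)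
  have hsum : 1 ≤ exp x * exp y := by
    rw [← exp_add]; exact one_le_exp (by linarith [neg_abs_le x])
  rw [abs_le, neg_div', div_le_div_iff₀ (by positivity) (by positivity),
    div_le_div_iff₀ (by positivity) (by positivity)]
  constructor <;> nlinarith

theorem abs_le_of_abs_epsErr_le {E : ℝ} (hM : 0 < M) (hu : |u| < M) (hE : |epsErr M M u| ≤ E) :
    |u| ≤ M * (exp E - 1) / (exp E + 1) := by
  rw [← mul_exp_epsErr_sub_one_div_exp_epsErr_add_one hM hu, mul_div_assoc, mul_div_assoc,
    abs_mul, abs_of_pos hM]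
  exact mul_le_mul_of_nonneg_left (abs_exp_sub_one_div_exp_add_one_le hE) hM.le

theorem mul_exp_sub_one_div_exp_add_one_lt (hM : 0 < M) (E : ℝ) :
    M * (exp E - 1) / (exp E + 1) < M := by
  rw [div_lt_iff₀ (by positivity)]
  nlinarith [exp_pos E]

end TransformedError

theorem hasDerivWithinAt_epsErr_comp_div {e p : ℝ → ℝ} {e' p' M t : ℝ} {S : Set ℝ}
    (he : HasDerivWithinAt e e' S t) (hp : HasDerivAt p p' t) (hpt : p t ≠ 0) (hM : 0 < M)
    (hξ : |e t / p t| < M) :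
    HasDerivWithinAt (fun s => epsErr M M (e s / p s))
      (gainFn M M (e t / p t) * ((e' - e t / p t * p') / p t)) S t := by
  refine ((hasDerivAt_epsErr (one_add_div_pos_of_abs_lt hM hξ).ne'
    (one_sub_div_pos_of_abs_lt hM hξ).ne').comp_hasDerivWithinAt t
    (he.div hp.hasDerivWithinAt hpt)).congr_deriv ?_
  field_simp

theorem mul_gain_mul_closedLoop_neg {M k l W ε r p p' ξ w : ℝ} (hM : 0 < M) (hk : 0 < k)
    (hp : 0 < p) (hp1 : p ≤ 1) (hp' : |p'| ≤ l) (hξ : |ξ| < M) (hw : |w| ≤ W)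
    (hr : 2 / M ≤ r) (hε : M * (W + l * M) / (2 * k) < |ε|) :
    ε * (r * ((-(k / p) * r * ε + w - ξ * p') / p)) < 0 := by
  have hW : 0 ≤ W := (abs_nonneg w).trans hw
  have hl : 0 ≤ l := (abs_nonneg p').trans hp'
  have hε0 : 0 < |ε| := lt_of_le_of_lt (by positivity) hε
  have hdrift : ε * (w - ξ * p') ≤ |ε| * (W + M * l) :=
    calc ε * (w - ξ * p') ≤ |ε| * (|w| + |ξ| * |p'|) := by
          rw [← abs_mul ξ]
          exact (le_abs_self _).trans ((abs_mul _ _).trans_le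
            (mul_le_mul_of_nonneg_left (abs_sub _ _) (abs_nonneg ε)))
      _ ≤ |ε| * (W + M * l) := by gcongr
  have hbalance : |ε| * (W + M * l) < 2 * k / M * ε ^ 2 := by
    rw [div_lt_iff₀ (by positivity)] at hε
    calc |ε| * (W + M * l) = |ε| * (M * (W + l * M)) / M := by field_simp
      _ < |ε| * (|ε| * (2 * k)) / M := by gcongr
      _ = 2 * k / M * ε ^ 2 := by rw [← sq_abs]; ring
  have hgain : 2 * k / M * ε ^ 2 ≤ k / p * r * ε ^ 2 := by
    have : k ≤ k / p := le_div_self hk.le hp hp1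
    calc 2 * k / M * ε ^ 2 = k * (2 / M) * ε ^ 2 := by ring
      _ ≤ k / p * r * ε ^ 2 := by gcongr
  have hr0 : 0 < r := (by positivity : (0 : ℝ) < 2 / M).trans_le hr
  calc ε * (r * ((-(k / p) * r * ε + w - ξ * p') / p))
      = r / p * (-(k / p * r * ε ^ 2) + ε * (w - ξ * p')) := by ring
    _ < 0 := mul_neg_of_pos_of_neg (by positivity) (by linarith)

theorem bearing_subsystem_bounds_general
    (M k l ρ_inf W : ℝ)
    (hM : 0 < M) (hk : 0 < k) (hl : 0 < l)
    (hρ0 : 0 < ρ_inf) (hρ1 : ρ_inf < M)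
    (T : EReal)
    (w e e' ξ : ℝ → ℝ)
    (hξ : ∀ t, ξ t = e t / perfFn l ρ_inf M t)
    (hw : ∀ t : ℝ, 0 ≤ t → (t : EReal) < T → |w t| ≤ W)
    (he : ∀ t : ℝ, 0 ≤ t → (t : EReal) < T →
      HasDerivWithinAt e (e' t) {s : ℝ | 0 ≤ s ∧ (s : EReal) < T} t)
    (hbound : ∀ t : ℝ, 0 ≤ t → (t : EReal) < T → |e t| < M * perfFn l ρ_inf M t)
    (heq : ∀ t : ℝ, 0 ≤ t → (t : EReal) < T →
      e' t = -(k / perfFn l ρ_inf M t) * gainFn M M (ξ t) * epsErr M M (ξ t) + w t)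
    (εbar : ℝ)
    (hεbar : εbar = max |epsErr M M (ξ 0)| (M * (W + l * M) / (2 * k))) :
    ∀ t : ℝ, 0 ≤ t → (t : EReal) < T →
      |epsErr M M (ξ t)| ≤ εbar ∧
      |ξ t| ≤ M * (Real.exp εbar - 1) / (Real.exp εbar + 1) ∧
      M * (Real.exp εbar - 1) / (Real.exp εbar + 1) < M := by
  have hq0 : 0 ≤ ρ_inf / M := by positivity
  have hq1 : ρ_inf / M ≤ 1 := (div_le_one hM).2 hρ1.le
  set p := perfFn l ρ_inf M
  set S := {s : ℝ | 0 ≤ s ∧ (s : EReal) < T}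
  have hp : ∀ t, 0 < p t := perfFn_pos hq0 hq1
  have hξM : ∀ t ∈ S, |ξ t| < M := fun t ht => by
    rw [hξ, abs_div, abs_of_pos (hp t), div_lt_iff₀ (hp t)]
    exact hbound t ht.1 ht.2
  have hε' : ∀ t ∈ S, HasDerivWithinAt (fun s => epsErr M M (ξ s)) (gainFn M M (ξ t) *
      ((e' t - ξ t * (-l * (p t - ρ_inf / M))) / p t)) S t := fun t ht => by
    rw [funext hξ]
    exact hasDerivWithinAt_epsErr_comp_div (he t ht.1 ht.2) (hasDerivAt_perfFn t) (hp t).ne' hM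
      (hξ t ▸ hξM t ht)
  have hε : ∀ t ∈ S, |epsErr M M (ξ t)| ≤ εbar := by
    intro t ht
    have hsub : Icc 0 t ⊆ S := fun s hs => ⟨hs.1, (EReal.coe_le_coe_iff.2 hs.2).trans_lt ht.2⟩
    refine abs_le_of_mul_deriv_neg (fun s hs => (hε' s (hsub hs)).mono hsub)
      (hεbar ▸ le_max_left _ _) (fun s hs hlarge => ?_) t ⟨ht.1, le_rfl⟩
    obtain ⟨hs0, hsT⟩ := hsub (Ico_subset_Icc_self hs)
    rw [heq s hs0 hsT]
    exact mul_gain_mul_closedLoop_neg hM hk (hp s) (perfFn_le_one hq1 hl.le hs0)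
      (abs_deriv_perfFn_le hq0 hq1 hl.le hs0) (hξM s ⟨hs0, hsT⟩) (hw s hs0 hsT)
      (two_div_le_gainFn hM (hξM s ⟨hs0, hsT⟩)) ((hεbar ▸ le_max_right _ _).trans_lt hlarge)
  intro t ht0 htT
  exact ⟨hε t ⟨ht0, htT⟩, abs_le_of_abs_epsErr_le hM (hξM t ⟨ht0, htT⟩) (hε t ⟨ht0, htT⟩),
    mul_exp_sub_one_div_exp_add_one_lt hM εbar⟩

/-- the prescribed-performance closed-loop bearing-error
subsystem. With ε̄ = max{|ε_{M,M}(ξ(0))|, M(W + lM)/(2k)}, the transformed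
error satisfies |ε_{M,M}(ξ(t))| ≤ ε̄ and the normalized error satisfies
|ξ(t)| ≤ M(e^{ε̄} − 1)/(e^{ε̄} + 1) < M on [0, T). -/
theorem bearing_subsystem_bounds
    (M k l ρ_inf W : ℝ)
    (hM : 0 < M) (hk : 0 < k) (hl : 0 < l)
    (hρ0 : 0 < ρ_inf) (hρ1 : ρ_inf < M) (hW : 0 ≤ W)
    (T : EReal) (hT : 0 < T)
    (w e e' ξ : ℝ → ℝ)
    (hξ : ∀ t, ξ t = e t / perfFn l ρ_inf M t)
    (hw : ∀ t : ℝ, 0 ≤ t → (t : EReal) < T → |w t| ≤ W)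
    (he : ∀ t : ℝ, 0 ≤ t → (t : EReal) < T →
      HasDerivWithinAt e (e' t) {s : ℝ | 0 ≤ s ∧ (s : EReal) < T} t)
    (hbound : ∀ t : ℝ, 0 ≤ t → (t : EReal) < T → |e t| < M * perfFn l ρ_inf M t)
    (heq : ∀ t : ℝ, 0 ≤ t → (t : EReal) < T →
      e' t = -(k / perfFn l ρ_inf M t) * gainFn M M (ξ t) * epsErr M M (ξ t) + w t)
    (εbar : ℝ)
    (hεbar : εbar = max |epsErr M M (ξ 0)| (M * (W + l * M) / (2 * k))) :
    ∀ t : ℝ, 0 ≤ t → (t : EReal) < T →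
      |epsErr M M (ξ t)| ≤ εbar ∧
      |ξ t| ≤ M * (Real.exp εbar - 1) / (Real.exp εbar + 1) ∧
      M * (Real.exp εbar - 1) / (Real.exp εbar + 1) < M :=
  bearing_subsystem_bounds_general M k l ρ_inf W hM hk hl hρ0 hρ1 T w e e' ξ hξ hw he hbound heq
    εbar hεbar
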